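/- For every set F ⊆ ℝ^d, the generalized upper box dimension of F is zero if and only if the quasi-Assouad dimension of F is zero: \overline{dim}_GB F = 0 ⟺ dim_qA F = 0. -/

import Mathlib

open Filter Metric Set Topology Bornology ENNReal

noncomputable section

variable {X : Type*} [PseudoMetricSpace X]

/-- `coveringNumber r E` is the smallest number of closed balls of radius `r`
needed to cover `E` (with value `⊤` if no finite cover exists). -/
def coveringNumber (r : ℝ) (E : Set X) : ℕ∞ :=
  sInf {n : ℕ∞ | ∃ t : Finset X, (E ⊆ ⋃ x ∈ t, closedBall x r) ∧ (t.card : ℕ∞) = n}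

/-- The Assouad spectrum `dim_A^θ F`. -/
def assouadSpectrum (θ : ℝ) (F : Set X) : ℝ :=
  sInf {s : ℝ | 0 ≤ s ∧ ∃ C > (0 : ℝ), ∀ R : ℝ, 0 < R → R < 1 → ∀ x ∈ F,
    (coveringNumber (R ^ (1 / θ)) (closedBall x R ∩ F) : ℝ≥0∞)
      ≤ ENNReal.ofReal (C * (R / R ^ (1 / θ)) ^ s)}

/-- The upper spectrum `\overline{dim}_A^θ F`. -/
def upperSpectrum (θ : ℝ) (F : Set X) : ℝ :=
  sInf {s : ℝ | 0 ≤ s ∧ ∃ C > (0 : ℝ), ∀ r R : ℝ, 0 < r → r ≤ R ^ (1 / θ) →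
    R ^ (1 / θ) < R → R < 1 → 0 < R → ∀ x ∈ F,
    (coveringNumber r (closedBall x R ∩ F) : ℝ≥0∞) ≤ ENNReal.ofReal (C * (R / r) ^ s)}

/-- The generalized upper box dimension `\overline{dim}_{GB} F := limsup_{θ → 0⁺} dim_A^θ F`. -/
def genUpperBoxDim (F : Set X) : ℝ :=
  limsup (fun θ : ℝ => assouadSpectrum θ F) (𝓝[>] (0 : ℝ))

/-- The quasi-Assouad dimension `dim_{qA} F := lim_{θ → 1⁻} \overline{dim}_A^θ F`
(the limit exists by monotonicity, hence equals the limsup). -/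
def quasiAssouadDim (F : Set X) : ℝ :=
  limsup (fun θ : ℝ => upperSpectrum θ F) (𝓝[<] (1 : ℝ))

/-- The upper box dimension `\overline{dim}_B F := limsup_{δ → 0⁺} log N_δ(F) / (- log δ)`. -/
def upperBoxDim (F : Set X) : ℝ :=
  limsup (fun δ : ℝ => Real.log ((coveringNumber δ F).toNat : ℝ) / (- Real.log δ))
    (𝓝[>] (0 : ℝ))

/-- The Assouad dimension `dim_A F`. -/
def assouadDim (F : Set X) : ℝ :=
  sInf {s : ℝ | 0 ≤ s ∧ ∃ C > (0 : ℝ), ∃ ρ > (0 : ℝ), ∀ r R : ℝ, 0 < r → r < R → R < ρ →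
    ∀ x ∈ F, (coveringNumber r (closedBall x R ∩ F) : ℝ≥0∞) ≤ ENNReal.ofReal (C * (R / r) ^ s)}

/-- The packing pre-measure at scale `δ`: the supremum of `∑ |B_i|^s` over at most countable
collections of disjoint closed balls of radii at most `δ` (and positive) with centres in `F`,
where `|B_i| = 2 r_i` is the diameter. -/
def packingPre (s δ : ℝ) (F : Set X) : ℝ≥0∞ :=
  ⨆ (D : Set (X × ℝ)) (_ : D.Countable)
    (_ : ∀ p ∈ D, p.1 ∈ F ∧ 0 < p.2 ∧ p.2 ≤ δ)
    (_ : D.Pairwise fun p q => Disjoint (closedBall p.1 p.2) (closedBall q.1 q.2)),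
    ∑' p : D, ENNReal.ofReal ((2 * (p : X × ℝ).2) ^ s)

/-- `𝒫₀^s(F) := lim_{δ → 0} 𝒫_δ^s(F)`; the limit exists by monotonicity and equals the inf. -/
def packingPre₀ (s : ℝ) (F : Set X) : ℝ≥0∞ :=
  ⨅ (δ : ℝ) (_ : 0 < δ), packingPre s δ F

/-- The packing (outer) measure `𝒫^s(F)`. -/
def packingMeasure (s : ℝ) (F : Set X) : ℝ≥0∞ :=
  ⨅ (G : ℕ → Set X) (_ : F ⊆ ⋃ i, G i), ∑' i, packingPre₀ s (G i)

/-- The packing dimension `dim_P F = inf {s ≥ 0 : 𝒫^s(F) = 0}`. -/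
def packingDim (F : Set X) : ℝ :=
  sInf {s : ℝ | 0 ≤ s ∧ packingMeasure s F = 0}


/-!
If `dim_qA F = 0`, then every upper spectrum vanishes, because `\overline{dim}_A^θ` is
nondecreasing in `θ`; since `dim_A^θ ≤ \overline{dim}_A^θ`, so does every Assouad spectrum.

Conversely, suppose `dim_A^{θ₀} F < s` for some `θ₀ ≤ 1/3`. Then one application of the covering
bound takes scale `ρ` to scale `2 ρ^{1/θ₀} ≤ ρ²`, so about `log log (1/r)` applications lead from
scale `1/2` down to any `r`. Along the way the factors `(ρ / ρ^{1/θ₀})^s` telescope, and the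
accumulated constants grow only like a power of `log (1/r)`. Hence every unit ball meets `F` in a
set covered by `O(r^{-4s})` balls of radius `r`, which gives `\overline{dim}_A^θ F ≤ 4s / (1 - θ)`
for every `θ < 1`. If `\overline{dim}_GB F = 0`, such `θ₀` exist for every `s > 0`.

The Euclidean volume bound `N_r(B(x,R)) ≤ (3R/r)^d` keeps every spectrum finite and handles scales
above `1/4`. The argument applies to any set satisfying such a doubling bound.
-/

/-- A real-valued form of `coveringNumber r E ≤ c`. -/
def Coverable (r c : ℝ) (E : Set X) : Prop :=
  ∃ t : Finset X, (E ⊆ ⋃ x ∈ t, closedBall x r) ∧ (t.card : ℝ) ≤ c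

section Coverable

variable {r c : ℝ} {E : Set X}

theorem Coverable.mono {r' c' : ℝ} {E' : Set X} (h : Coverable r c E) (hr : r ≤ r')
    (hc : c ≤ c') (hE : E' ⊆ E) : Coverable r' c' E' := by
  obtain ⟨t, hcov, hcard⟩ := h
  exact ⟨t, hE.trans (hcov.trans (iUnion₂_mono fun _ _ => closedBall_subset_closedBall hr)),
    hcard.trans hc⟩

theorem Coverable.coveringNumber_le (h : Coverable r c E) :
    (coveringNumber r E : ℝ≥0∞) ≤ ENNReal.ofReal c := by
  obtain ⟨t, hcov, hcard⟩ := h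
  calc (coveringNumber r E : ℝ≥0∞) ≤ ((t.card : ℕ∞) : ℝ≥0∞) :=
        ENat.toENNReal_le.2 (sInf_le ⟨t, hcov, rfl⟩)
    _ = ENNReal.ofReal t.card := by simp
    _ ≤ ENNReal.ofReal c := ENNReal.ofReal_le_ofReal hcard

theorem Coverable.of_coveringNumber_le (hc : 0 ≤ c)
    (h : (coveringNumber r E : ℝ≥0∞) ≤ ENNReal.ofReal c) : Coverable r c E := by
  have hne : coveringNumber r E ≠ ⊤ := fun htop => by simp [htop] at h
  obtain ⟨_, hmem, -⟩ := sInf_lt_iff.1 hne.lt_top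
  obtain ⟨t, hcov, hcard⟩ := csInf_mem ⟨_, hmem⟩
  refine ⟨t, hcov, (ENNReal.ofReal_le_ofReal_iff hc).1 ?_⟩
  rwa [ENNReal.ofReal_natCast, ← ENat.toENNReal_coe, hcard]

theorem coverable_biUnion {ι : Type*} (s : Finset ι) {A : ι → Set X}
    (h : ∀ i ∈ s, Coverable r c (A i)) : Coverable r (s.card * c) (⋃ i ∈ s, A i) := by
  classical
  choose! u hu hcard using h
  refine ⟨s.biUnion u, iUnion₂_subset fun i hi => (hu i hi).trans ?_, ?_⟩
  · exact iUnion₂_mono' fun y hy => ⟨y, Finset.mem_biUnion.2 ⟨i, hi, hy⟩, subset_rfl⟩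
  · calc ((s.biUnion u).card : ℝ) ≤ ∑ i ∈ s, ((u i).card : ℝ) := by
          exact_mod_cast Finset.card_biUnion_le
      _ ≤ ∑ i ∈ s, c := Finset.sum_le_sum hcard
      _ = s.card * c := by simp

/-- The pieces may be centred in `E` because each `ρ`-ball that meets `E` lies in the `2ρ`-ball
around any of its points in `E`. -/
theorem Coverable.of_pieces {ρ c₁ : ℝ} (h : Coverable ρ c₁ E) (hc : 0 ≤ c)
    (hpieces : ∀ z ∈ E, Coverable r c (closedBall z (2 * ρ) ∩ E)) :
    Coverable r (c₁ * c) E := by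
  obtain ⟨t, hcov, hcard⟩ := h
  have hballs : ∀ x ∈ t, Coverable r c (closedBall x ρ ∩ E) := by
    intro x _
    rcases (closedBall x ρ ∩ E).eq_empty_or_nonempty with hempty | ⟨z, hzx, hzE⟩
    · exact ⟨∅, by simp [hempty], by simpa using hc⟩
    refine (hpieces z hzE).mono le_rfl le_rfl fun p ⟨hpx, hpE⟩ => ⟨?_, hpE⟩
    rw [mem_closedBall] at hpx hzx ⊢
    linarith [dist_triangle p x z, dist_comm z x]
  refine (coverable_biUnion t hballs).mono le_rfl (mul_le_mul_of_nonneg_right hcard hc) ?_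
  intro p hp
  obtain ⟨x, hx, hpx⟩ := mem_iUnion₂.1 (hcov hp)
  exact mem_iUnion₂.2 ⟨x, hx, hpx, hp⟩

/-- Covering number is at most packing number: a maximal `r`-separated subset is an `r`-net. -/
theorem coverable_of_forall_card_le (hr : 0 ≤ r)
    (h : ∀ t : Finset X, ↑t ⊆ E → (t : Set X).Pairwise (r < dist · ·) → (t.card : ℝ) ≤ c) :
    Coverable r c E := by
  classical
  set S := {k | ∃ t : Finset X, ↑t ⊆ E ∧ (t : Set X).Pairwise (r < dist · ·) ∧ t.card = k}
  have hbdd : BddAbove S := by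
    refine ⟨⌊c⌋₊, ?_⟩
    rintro _ ⟨t, htE, hsep, rfl⟩
    exact Nat.le_floor (h t htE hsep)
  have hne : S.Nonempty := ⟨0, ∅, by simp, by simp, rfl⟩
  obtain ⟨t, htE, hsep, hmax⟩ := Nat.sSup_mem hne hbdd
  refine ⟨t, fun p hp => ?_, h t htE hsep⟩
  by_contra hfar
  simp only [mem_iUnion, mem_closedBall, exists_prop, not_exists, not_and, not_le] at hfar
  have hpt : p ∉ t := fun hpt => (hfar p hpt).not_ge (by simpa using hr)
  have hins : (insert p t).card ∈ S := by
    refine ⟨insert p t, ?_, ?_, rfl⟩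
    · rw [Finset.coe_insert]; exact insert_subset hp htE
    · rw [Finset.coe_insert]
      exact hsep.insert fun b hb _ => ⟨hfar b hb, dist_comm p b ▸ hfar b hb⟩
  have := le_csSup hbdd hins
  rw [Finset.card_insert_of_notMem hpt] at this
  omega

end Coverable

def AssouadBound (t C : ℝ) (F : Set X) : Prop :=
  ∀ x ∈ F, ∀ r R : ℝ, 0 < r → r ≤ R → Coverable r (C * (R / r) ^ t) (closedBall x R ∩ F)

section FiniteDimensional

open MeasureTheory Module

variable {E : Type*} [NormedAddCommGroup E] [NormedSpace ℝ E] [FiniteDimensional ℝ E]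

theorem card_le_of_pairwise_lt_dist {x : E} {r R : ℝ} (hr : 0 < r) (hrR : r ≤ R) {t : Finset E}
    (ht : ↑t ⊆ closedBall x R) (hsep : (t : Set E).Pairwise (r < dist · ·)) :
    (t.card : ℝ) ≤ (3 * (R / r)) ^ finrank ℝ E := by
  borelize E
  set μ : Measure E := Measure.addHaar
  set d := finrank ℝ E
  have hvol (z : E) {ρ : ℝ} (hρ : 0 ≤ ρ) :
      μ (closedBall z ρ) = ENNReal.ofReal (ρ ^ d) * μ (ball 0 1) :=
    Measure.addHaar_closedBall μ z hρ
  have hdisj : (t : Set E).PairwiseDisjoint (closedBall · (r / 2)) := fun a ha b hb hab =>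
    closedBall_disjoint_closedBall (by linarith [hsep ha hb hab])
  have hsub : ⋃ z ∈ t, closedBall z (r / 2) ⊆ closedBall x (R + r / 2) :=
    iUnion₂_subset fun z hz =>
      closedBall_subset_closedBall' (by linarith [mem_closedBall.1 (ht hz)])
  have hμ : (t.card : ℝ≥0∞) * μ (closedBall x (r / 2)) ≤ μ (closedBall x (R + r / 2)) :=
    calc (t.card : ℝ≥0∞) * μ (closedBall x (r / 2))
        = ∑ z ∈ t, μ (closedBall z (r / 2)) := by simp [hvol _ (by positivity : 0 ≤ r / 2)]
      _ = μ (⋃ z ∈ t, closedBall z (r / 2)) :=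
          (measure_biUnion_finset hdisj fun _ _ => measurableSet_closedBall).symm
      _ ≤ _ := measure_mono hsub
  rw [hvol x (by positivity), hvol x (by linarith), ← mul_assoc,
    ENNReal.mul_le_mul_iff_left (measure_ball_pos μ 0 one_pos).ne' measure_ball_lt_top.ne,
    ← ENNReal.ofReal_natCast, ← ENNReal.ofReal_mul (by positivity),
    ENNReal.ofReal_le_ofReal_iff (pow_nonneg (by linarith) d)] at hμ
  refine le_of_mul_le_mul_right (hμ.trans ?_) (by positivity : 0 < (r / 2) ^ d)
  rw [← mul_pow]
  exact pow_le_pow_left₀ (by linarith) (by field_simp; linarith) d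

theorem assouadBound_of_finiteDimensional (F : Set E) :
    AssouadBound (finrank ℝ E) (3 ^ finrank ℝ E) F := by
  intro x _ r R hr hrR
  refine (coverable_of_forall_card_le hr.le fun t ht hsep =>
    card_le_of_pairwise_lt_dist hr hrR (ht.trans inter_subset_left) hsep).mono le_rfl ?_ subset_rfl
  rw [Real.rpow_natCast, mul_pow]

end FiniteDimensional

def AssouadSpectrumBound (θ s C : ℝ) (F : Set X) : Prop :=
  ∀ R : ℝ, 0 < R → R < 1 → ∀ x ∈ F,
    Coverable (R ^ (1 / θ)) (C * (R / R ^ (1 / θ)) ^ s) (closedBall x R ∩ F)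

def UpperSpectrumBound (θ s C : ℝ) (F : Set X) : Prop :=
  ∀ r R : ℝ, 0 < r → r ≤ R ^ (1 / θ) → R ^ (1 / θ) < R → R < 1 → 0 < R → ∀ x ∈ F,
    Coverable r (C * (R / r) ^ s) (closedBall x R ∩ F)

section Spectra

variable {θ s t C : ℝ} {F : Set X}

theorem assouadSpectrum_eq_sInf (θ : ℝ) (F : Set X) :
    assouadSpectrum θ F = sInf {s | 0 ≤ s ∧ ∃ C > 0, AssouadSpectrumBound θ s C F} := by
  refine congrArg sInf (Set.ext fun s => and_congr_right fun _ => exists_congr fun C =>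
    and_congr_right fun hC => ⟨fun h R hR0 hR1 x hx => ?_, fun h R hR0 hR1 x hx => ?_⟩)
  · exact .of_coveringNumber_le (by positivity) (h R hR0 hR1 x hx)
  · exact (h R hR0 hR1 x hx).coveringNumber_le

theorem upperSpectrum_eq_sInf (θ : ℝ) (F : Set X) :
    upperSpectrum θ F = sInf {s | 0 ≤ s ∧ ∃ C > 0, UpperSpectrumBound θ s C F} := by
  refine congrArg sInf (Set.ext fun s => and_congr_right fun _ => exists_congr fun C =>
    and_congr_right fun hC => ⟨fun h r R hr h₁ h₂ h₃ hR x hx => ?_,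
      fun h r R hr h₁ h₂ h₃ hR x hx => ?_⟩)
  · exact .of_coveringNumber_le (by positivity) (h r R hr h₁ h₂ h₃ hR x hx)
  · exact (h r R hr h₁ h₂ h₃ hR x hx).coveringNumber_le

theorem assouadSpectrum_nonneg (θ : ℝ) (F : Set X) : 0 ≤ assouadSpectrum θ F :=
  Real.sInf_nonneg fun _ h => h.1

theorem upperSpectrum_nonneg (θ : ℝ) (F : Set X) : 0 ≤ upperSpectrum θ F :=
  Real.sInf_nonneg fun _ h => h.1

theorem UpperSpectrumBound.upperSpectrum_le (h : UpperSpectrumBound θ s C F) (hs : 0 ≤ s)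
    (hC : 0 < C) : upperSpectrum θ F ≤ s := by
  rw [upperSpectrum_eq_sInf]
  exact csInf_le ⟨0, fun _ h => h.1⟩ ⟨hs, C, hC, h⟩

theorem UpperSpectrumBound.assouadSpectrumBound (h : UpperSpectrumBound θ s C F) (hθ : 0 < θ)
    (hθ1 : θ < 1) : AssouadSpectrumBound θ s C F := fun R hR0 hR1 x hx =>
  h _ R (by positivity) le_rfl (Real.rpow_lt_self_of_lt_one hR0 hR1 (one_lt_one_div hθ hθ1))
    hR1 hR0 x hx

theorem UpperSpectrumBound.anti {θ' : ℝ} (h : UpperSpectrumBound θ' s C F) (hθ : 0 < θ)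
    (hθθ' : θ ≤ θ') (hθ'1 : θ' < 1) : UpperSpectrumBound θ s C F := by
  intro r R hr hrθ _ hR1 hR0 x hx
  have hθ' : 0 < θ' := hθ.trans_le hθθ'
  refine h r R hr (hrθ.trans ?_)
    (Real.rpow_lt_self_of_lt_one hR0 hR1 (one_lt_one_div hθ' hθ'1)) hR1 hR0 x hx
  exact Real.rpow_le_rpow_of_exponent_ge hR0 hR1.le (one_div_le_one_div_of_le hθ hθθ')

theorem AssouadBound.upperSpectrumBound (hF : AssouadBound t C F) :
    UpperSpectrumBound θ t C F := fun r R hr hrθ hRθ _ _ x hx =>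
  hF x hx r R hr (hrθ.trans hRθ.le)

theorem AssouadBound.upperSpectrum_le (hF : AssouadBound t C F) (ht : 0 ≤ t) (hC : 0 < C) :
    upperSpectrum θ F ≤ t :=
  hF.upperSpectrumBound.upperSpectrum_le ht hC

theorem AssouadBound.assouadSpectrum_le_upperSpectrum (hF : AssouadBound t C F) (ht : 0 ≤ t)
    (hC : 0 < C) (hθ : 0 < θ) (hθ1 : θ < 1) : assouadSpectrum θ F ≤ upperSpectrum θ F := by
  rw [assouadSpectrum_eq_sInf, upperSpectrum_eq_sInf]
  exact csInf_le_csInf ⟨0, fun _ h => h.1⟩ ⟨t, ht, C, hC, hF.upperSpectrumBound⟩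
    fun s ⟨hs, C', hC', h⟩ => ⟨hs, C', hC', h.assouadSpectrumBound hθ hθ1⟩

theorem AssouadBound.upperSpectrum_mono (hF : AssouadBound t C F) (ht : 0 ≤ t) (hC : 0 < C)
    {θ' : ℝ} (hθ : 0 < θ) (hθθ' : θ ≤ θ') (hθ'1 : θ' < 1) :
    upperSpectrum θ F ≤ upperSpectrum θ' F := by
  rw [upperSpectrum_eq_sInf, upperSpectrum_eq_sInf]
  exact csInf_le_csInf ⟨0, fun _ h => h.1⟩ ⟨t, ht, C, hC, hF.upperSpectrumBound⟩
    fun s ⟨hs, C', hC', h⟩ => ⟨hs, C', hC', h.anti hθ hθθ' hθ'1⟩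

theorem AssouadBound.exists_assouadSpectrumBound (hF : AssouadBound t C F) (ht : 0 ≤ t)
    (hC : 0 < C) (hθ : 0 < θ) (hθ1 : θ < 1) (hs : assouadSpectrum θ F < s) :
    ∃ C' ≥ 1, AssouadSpectrumBound θ s C' F := by
  have hne : {s | 0 ≤ s ∧ ∃ C > 0, AssouadSpectrumBound θ s C F}.Nonempty :=
    ⟨t, ht, C, hC, hF.upperSpectrumBound.assouadSpectrumBound hθ hθ1⟩
  rw [assouadSpectrum_eq_sInf] at hs
  obtain ⟨s', ⟨-, C', -, h⟩, hs'⟩ := exists_lt_of_csInf_lt hne hs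
  refine ⟨max C' 1, le_max_right _ _, fun R hR0 hR1 x hx =>
    (h R hR0 hR1 x hx).mono le_rfl ?_ subset_rfl⟩
  have hR : 1 ≤ R / R ^ (1 / θ) := (one_le_div (by positivity)).2
    (Real.rpow_le_self_of_le_one hR0.le hR1.le (one_le_one_div hθ hθ1.le))
  exact mul_le_mul (le_max_left _ _) (Real.rpow_le_rpow_of_exponent_le hR hs'.le)
    (by positivity) (by positivity)

end Spectra

/-- About `log₂ log₂ (1/r)` squarings take `1/2` below `r`, and `K` to that power is only
polylogarithmic in `1/r`. -/
theorem exists_half_pow_two_pow_le_and_pow_le {K η : ℝ} (hK : 0 ≤ K) (hη : 0 < η) :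
    ∃ B ≥ 1, ∀ r : ℝ, 0 < r → r ≤ 1 →
      ∃ n : ℕ, (1 / 2 : ℝ) ^ 2 ^ n ≤ r ∧ K ^ n ≤ B * (1 / r) ^ η := by
  obtain ⟨M, hM⟩ := pow_unbounded_of_one_lt K one_lt_two
  set c := η * Real.log 2
  have hc : 0 < c := mul_pos hη (Real.log_pos one_lt_two)
  refine ⟨max 1 ((2 / c) ^ M * M.factorial), le_max_left _ _, fun r hr hr1 => ?_⟩
  have hex : ∃ n : ℕ, (1 / 2 : ℝ) ^ 2 ^ n ≤ r := by
    obtain ⟨n, hn⟩ := exists_pow_lt_of_lt_one hr one_half_lt_one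
    exact ⟨n, (pow_le_pow_of_le_one (by norm_num) (by norm_num) Nat.lt_two_pow_self.le).trans hn.le⟩
  classical
  refine ⟨Nat.find hex, Nat.find_spec hex, ?_⟩
  have h1r : 1 ≤ 1 / r := by rw [le_div_iff₀ hr]; linarith
  rcases hn : Nat.find hex with _ | k
  · simpa using one_le_mul_of_one_le_of_one_le (le_max_left _ _) (Real.one_le_rpow h1r hη.le)
  -- minimality of `n = k + 1` gives `1 / r > 2 ^ 2 ^ k`, i.e. `(1 / r) ^ η > exp (c 2 ^ k)`
  have hk : r < (1 / 2) ^ 2 ^ k := not_le.1 (Nat.find_min hex (by omega))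
  have hexp : Real.exp (c * 2 ^ k) ≤ (1 / r) ^ η := by
    have h2k : (2 : ℝ) ^ 2 ^ k ≤ 1 / r := by
      rw [one_div_pow, lt_div_iff₀ (by positivity)] at hk
      rw [le_div_iff₀ hr]
      linarith
    have hlog := Real.log_le_log (by positivity) h2k
    rw [Real.log_pow] at hlog
    push_cast at hlog
    rw [Real.rpow_def_of_pos (by positivity), Real.exp_le_exp]
    nlinarith
  calc K ^ (k + 1) ≤ ((2 : ℝ) ^ M) ^ (k + 1) := pow_le_pow_left₀ hK hM.le _
    _ = (2 / c) ^ M * (c * 2 ^ k) ^ M := by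
        rw [← mul_pow, ← pow_mul, mul_comm M, pow_mul]
        congr 1
        field_simp
        ring
    _ ≤ (2 / c) ^ M * (M.factorial * Real.exp (c * 2 ^ k)) := by
        gcongr
        exact (div_le_iff₀' (by positivity)).1 (Real.pow_div_factorial_le_exp _ (by positivity) M)
    _ ≤ max 1 ((2 / c) ^ M * M.factorial) * (1 / r) ^ η := by
        rw [← mul_assoc]
        exact mul_le_mul (le_max_right _ _) hexp (by positivity) (by positivity)

def BoxBound (u B : ℝ) (F : Set X) : Prop :=
  ∀ x ∈ F, ∀ r : ℝ, 0 < r → r ≤ 1 → Coverable r (B * (1 / r) ^ u) (closedBall x 1 ∩ F)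

section Chain

variable {θ s C : ℝ} {F : Set X}

theorem AssouadSpectrumBound.coverable_of_rpow_le (H : AssouadSpectrumBound θ s C F)
    (hθ : 0 < θ) (hs : 0 ≤ s) (hC : 0 ≤ C) {ρ r : ℝ} (hρ : 0 < ρ) (hr1 : r < 1)
    (hρr : ρ ^ (1 / θ) ≤ r) {y : X} (hy : y ∈ F) :
    Coverable r (C * (1 / r) ^ s) (closedBall y ρ ∩ F) := by
  have hr : 0 < r := (Real.rpow_pos_of_pos hρ _).trans_le hρr
  have hρ₀ : (r ^ θ) ^ (1 / θ) = r := by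
    rw [← Real.rpow_mul hr.le, mul_one_div_cancel hθ.ne', Real.rpow_one]
  have hρρ₀ : ρ ≤ r ^ θ :=
    calc ρ = (ρ ^ (1 / θ)) ^ θ := by
          rw [← Real.rpow_mul hρ.le, one_div_mul_cancel hθ.ne', Real.rpow_one]
      _ ≤ r ^ θ := Real.rpow_le_rpow (by positivity) hρr hθ.le
  have h := H (r ^ θ) (by positivity) (Real.rpow_lt_one hr.le hr1 hθ) y hy
  rw [hρ₀] at h
  refine h.mono le_rfl (mul_le_mul_of_nonneg_left ?_ hC)
    (inter_subset_inter_left _ (closedBall_subset_closedBall hρρ₀))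
  exact Real.rpow_le_rpow (by positivity)
    (div_le_div_of_nonneg_right (Real.rpow_le_one hr.le hr1.le hθ.le) hr.le) hs

/-- One application of the spectrum bound takes the scale from `ρ` to `2 ρ ^ (1/θ) ≤ ρ ^ 2`, so
`n` applications reach any scale `r ≥ ρ ^ 2 ^ n`; the factors `(ρ / ρ ^ (1/θ)) ^ s` telescope. -/
theorem AssouadSpectrumBound.coverable_of_pow_two_pow_le (H : AssouadSpectrumBound θ s C F)
    (hθ : 0 < θ) (hθ3 : θ ≤ 1 / 3) (hs : 0 ≤ s) (hC : 1 ≤ C) (n : ℕ) {ρ r : ℝ} (hρ : 0 < ρ)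
    (hρ2 : ρ ≤ 1 / 2) (hr : 0 < r) (hrρ : r ≤ ρ) (hn : ρ ^ 2 ^ n ≤ r) {y : X} (hy : y ∈ F) :
    Coverable r ((2 ^ s * C) ^ (n + 1) * (ρ / r) ^ s * (1 / r) ^ s) (closedBall y ρ ∩ F) := by
  set K := (2 : ℝ) ^ s * C
  have hK : C ≤ K := le_mul_of_one_le_left (by linarith) (Real.one_le_rpow one_le_two hs)
  have ha : 3 ≤ 1 / θ := by rw [le_div_iff₀ hθ]; linarith
  have direct : ∀ (n : ℕ) {ρ : ℝ} {y : X}, 0 < ρ → r ≤ ρ → ρ ^ (1 / θ) ≤ r → y ∈ F →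
      Coverable r (K ^ (n + 1) * (ρ / r) ^ s * (1 / r) ^ s) (closedBall y ρ ∩ F) := by
    intro n ρ y hρ hrρ hdir hy
    refine (H.coverable_of_rpow_le hθ hs (by linarith) hρ (by linarith) hdir hy).mono le_rfl ?_
      subset_rfl
    gcongr ?_ * _
    calc C ≤ K ^ (n + 1) * 1 := by simpa using hK.trans (le_self_pow₀ (hC.trans hK) (by omega))
      _ ≤ _ := by gcongr; exact Real.one_le_rpow ((one_le_div hr).2 hrρ) hs
  induction n generalizing ρ y with
  | zero =>
    refine direct 0 hρ hrρ ((Real.rpow_le_self_of_le_one hρ.le (by linarith) ?_).trans ?_) hy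
    · linarith
    · simpa using hn
  | succ n ih =>
    rcases le_or_gt (ρ ^ (1 / θ)) r with hdir | hlt
    · exact direct _ hρ hrρ hdir hy
    set ρ' := 2 * ρ ^ (1 / θ)
    have hρ' : ρ' ≤ ρ ^ 2 := by
      have : ρ ^ (1 / θ) ≤ ρ ^ 3 := by
        exact_mod_cast Real.rpow_le_rpow_of_exponent_ge hρ (by linarith) ha
      nlinarith
    have hstep := (H ρ hρ (by linarith) y hy).of_pieces
      (c := K ^ (n + 1) * (ρ' / r) ^ s * (1 / r) ^ s) (by positivity) fun z hz =>
      (ih (ρ := ρ') (by positivity) (by nlinarith) (by linarith)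
        ((pow_le_pow_left₀ (by positivity) hρ' _).trans (by rwa [← pow_mul, ← pow_succ']))
        hz.2).mono le_rfl le_rfl (inter_subset_inter_right _ inter_subset_right)
    have hprod : (ρ / ρ ^ (1 / θ)) ^ s * (ρ' / r) ^ s = 2 ^ s * (ρ / r) ^ s := by
      rw [← Real.mul_rpow (by positivity) (by positivity),
        ← Real.mul_rpow (by norm_num) (by positivity)]
      congr 1
      field_simp
      exact mul_comm _ _
    refine hstep.mono le_rfl (le_of_eq ?_) subset_rfl
    calc C * (ρ / ρ ^ (1 / θ)) ^ s * (K ^ (n + 1) * (ρ' / r) ^ s * (1 / r) ^ s)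
        = K ^ (n + 1) * C * ((ρ / ρ ^ (1 / θ)) ^ s * (ρ' / r) ^ s) * (1 / r) ^ s := by ring
      _ = K ^ (n + 1 + 1) * (ρ / r) ^ s * (1 / r) ^ s := by rw [hprod, pow_succ]; ring

end Chain

section Box

variable {θ s t C D u B : ℝ} {F : Set X}

theorem AssouadSpectrumBound.boxBound (H : AssouadSpectrumBound θ s C F) (hθ : 0 < θ)
    (hθ3 : θ ≤ 1 / 3) (hs : 0 < s) (hC : 1 ≤ C) (hF : AssouadBound t D F) (hD : 0 < D) :
    ∃ B > 0, BoxBound (4 * s) B F := by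
  set K := (2 : ℝ) ^ s * C
  have hK : 1 ≤ K := one_le_mul_of_one_le_of_one_le (Real.one_le_rpow one_le_two hs.le) hC
  obtain ⟨B, hB, hKB⟩ :=
    exists_half_pow_two_pow_le_and_pow_le (K := K) (by positivity) (by positivity : 0 < 2 * s)
  refine ⟨D * 4 ^ t * K * B, by positivity, fun x hx r hr hr1 => ?_⟩
  have hbase : Coverable (1 / 4) (D * 4 ^ t) (closedBall x 1 ∩ F) := by
    simpa using hF x hx (1 / 4) 1 (by norm_num) (by norm_num)
  have h1r : 1 ≤ 1 / r := by rw [le_div_iff₀ hr]; linarith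
  rcases le_or_gt (1 / 4) r with hr4 | hr4
  · refine hbase.mono hr4 ?_ subset_rfl
    rw [mul_assoc, mul_assoc]
    refine le_mul_of_one_le_right (by positivity) ?_
    exact one_le_mul_of_one_le_of_one_le hK
      (one_le_mul_of_one_le_of_one_le hB (Real.one_le_rpow h1r (by positivity)))
  obtain ⟨n, hn, hKn⟩ := hKB r hr hr1
  refine (hbase.of_pieces (c := K ^ (n + 1) * (1 / 2 / r) ^ s * (1 / r) ^ s) (by positivity)
    fun z hz => ?_).mono le_rfl ?_ subset_rfl
  · rw [show 2 * (1 / 4 : ℝ) = 1 / 2 by norm_num]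
    exact (H.coverable_of_pow_two_pow_le hθ hθ3 hs.le hC n (by norm_num) le_rfl hr
      (by linarith) hn hz.2).mono le_rfl le_rfl (inter_subset_inter_right _ inter_subset_right)
  have h2 : (1 / 2 / r) ^ s ≤ (1 / r) ^ s :=
    Real.rpow_le_rpow (by positivity) (by gcongr; norm_num) hs.le
  have h4 : (1 / r) ^ (2 * s) * (1 / r) ^ s * (1 / r) ^ s = (1 / r) ^ (4 * s) := by
    rw [← Real.rpow_add (by positivity), ← Real.rpow_add (by positivity)]
    ring_nf
  calc D * 4 ^ t * (K ^ (n + 1) * (1 / 2 / r) ^ s * (1 / r) ^ s)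
      ≤ D * 4 ^ t * (K * (B * (1 / r) ^ (2 * s)) * (1 / r) ^ s * (1 / r) ^ s) := by
        rw [pow_succ']
        gcongr
    _ = D * 4 ^ t * K * B * (1 / r) ^ (4 * s) := by rw [← h4]; ring

theorem BoxBound.upperSpectrumBound (h : BoxBound u B F) (hu : 0 ≤ u) (hB : 0 ≤ B) (hθ : 0 < θ)
    (hθ1 : θ < 1) : UpperSpectrumBound θ (u / (1 - θ)) B F := by
  intro r R hr hrθ hRθ hR1 hR0 x hx
  have hrR : r < R := hrθ.trans_lt hRθ
  refine (h x hx r hr (by linarith)).mono le_rfl (mul_le_mul_of_nonneg_left ?_ hB)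
    (inter_subset_inter_left _ (closedBall_subset_closedBall hR1.le))
  have hrθR : r ^ θ ≤ R :=
    calc r ^ θ ≤ (R ^ (1 / θ)) ^ θ := Real.rpow_le_rpow hr.le hrθ hθ.le
      _ = R := by rw [← Real.rpow_mul hR0.le, one_div_mul_cancel hθ.ne', Real.rpow_one]
  have hscale : (1 / r) ^ (1 - θ) ≤ R / r := by
    rw [Real.rpow_sub (by positivity), Real.rpow_one, Real.div_rpow zero_le_one hr.le,
      Real.one_rpow, div_div_eq_mul_div, div_one, one_div_mul_eq_div]
    exact div_le_div_of_nonneg_right hrθR hr.le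
  calc (1 / r) ^ u = ((1 / r) ^ (1 - θ)) ^ (u / (1 - θ)) := by
        rw [← Real.rpow_mul (by positivity), mul_div_cancel₀ _ (by linarith)]
    _ ≤ (R / r) ^ (u / (1 - θ)) :=
        Real.rpow_le_rpow (by positivity) hscale (div_nonneg hu (by linarith))

theorem AssouadBound.upperSpectrum_le_of_assouadSpectrum_lt (hF : AssouadBound t C F)
    (ht : 0 ≤ t) (hC : 0 < C) {θ₀ : ℝ} (hθ₀ : 0 < θ₀) (hθ₀3 : θ₀ ≤ 1 / 3) (hθ : 0 < θ)
    (hθ1 : θ < 1) (hs : assouadSpectrum θ₀ F < s) : upperSpectrum θ F ≤ 4 * s / (1 - θ) := by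
  have hs0 : 0 < s := (assouadSpectrum_nonneg θ₀ F).trans_lt hs
  obtain ⟨C', hC', H⟩ := hF.exists_assouadSpectrumBound ht hC hθ₀ (by linarith) hs
  obtain ⟨B, hB, hbox⟩ := H.boxBound hθ₀ hθ₀3 hs0 hC' hF hC
  have hθ' : 0 < 1 - θ := by linarith
  exact (hbox.upperSpectrumBound (by positivity) hB.le hθ hθ1).upperSpectrum_le
    (by positivity) hB

end Box

section Limits

variable {t C : ℝ} {F : Set X}

theorem AssouadBound.upperSpectrum_eq_zero_of_genUpperBoxDim_eq_zero (hF : AssouadBound t C F)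
    (ht : 0 ≤ t) (hC : 0 < C) (hGB : genUpperBoxDim F = 0) {θ : ℝ} (hθ : 0 < θ) (hθ1 : θ < 1) :
    upperSpectrum θ F = 0 := by
  refine le_antisymm (le_of_forall_pos_le_add fun ε hε => ?_) (upperSpectrum_nonneg θ F)
  have hθ' : 0 < 1 - θ := by linarith
  have hbdd : IsBoundedUnder (· ≤ ·) (𝓝[>] 0) (assouadSpectrum · F) :=
    isBoundedUnder_of_eventually_le (a := t) <| eventually_of_mem (Ioo_mem_nhdsGT one_pos)
      fun θ₀ hθ₀ => (hF.assouadSpectrum_le_upperSpectrum ht hC hθ₀.1 hθ₀.2).trans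
        (hF.upperSpectrum_le ht hC)
  have hsmall : ∀ᶠ θ₀ in 𝓝[>] 0, assouadSpectrum θ₀ F < ε * (1 - θ) / 4 :=
    eventually_lt_of_limsup_lt (by rw [← genUpperBoxDim, hGB]; positivity) hbdd
  obtain ⟨θ₀, hlt, hθ₀⟩ := (hsmall.and (Ioc_mem_nhdsGT (by norm_num : (0 : ℝ) < 1 / 3))).exists
  calc upperSpectrum θ F ≤ 4 * (ε * (1 - θ) / 4) / (1 - θ) :=
        hF.upperSpectrum_le_of_assouadSpectrum_lt ht hC hθ₀.1 hθ₀.2 hθ hθ1 hlt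
    _ = 0 + ε := by field_simp; ring

theorem AssouadBound.upperSpectrum_le_quasiAssouadDim (hF : AssouadBound t C F) (ht : 0 ≤ t)
    (hC : 0 < C) {θ : ℝ} (hθ : 0 < θ) (hθ1 : θ < 1) : upperSpectrum θ F ≤ quasiAssouadDim F :=
  le_limsup_of_frequently_le (eventually_of_mem (Ioo_mem_nhdsLT hθ1) fun _ hθ' =>
      hF.upperSpectrum_mono ht hC hθ hθ'.1.le hθ'.2).frequently
    (isBoundedUnder_of ⟨t, fun _ => hF.upperSpectrum_le ht hC⟩)

theorem AssouadBound.genUpperBoxDim_eq_zero_iff (hF : AssouadBound t C F) (ht : 0 ≤ t)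
    (hC : 0 < C) : genUpperBoxDim F = 0 ↔ quasiAssouadDim F = 0 := by
  constructor
  · intro hGB
    have h : ∀ᶠ θ in 𝓝[<] 1, upperSpectrum θ F = 0 := eventually_of_mem (Ioo_mem_nhdsLT one_pos)
      fun θ hθ => hF.upperSpectrum_eq_zero_of_genUpperBoxDim_eq_zero ht hC hGB hθ.1 hθ.2
    rw [quasiAssouadDim, limsup_congr h, limsup_const]
  · intro hqA
    have h : ∀ᶠ θ in 𝓝[>] 0, assouadSpectrum θ F = 0 := eventually_of_mem (Ioo_mem_nhdsGT one_pos)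
      fun θ hθ => le_antisymm ((hF.assouadSpectrum_le_upperSpectrum ht hC hθ.1 hθ.2).trans
        (hqA ▸ hF.upperSpectrum_le_quasiAssouadDim ht hC hθ.1 hθ.2)) (assouadSpectrum_nonneg θ F)
    rw [genUpperBoxDim, limsup_congr h, limsup_const]

end Limits

/-- `\overline{dim}_{GB} F = 0` if and only if `dim_{qA} F = 0`. -/
theorem genUpperBoxDim_eq_zero_iff_quasiAssouadDim_eq_zero
    (d : ℕ) (F : Set (EuclideanSpace ℝ (Fin d))) :
    genUpperBoxDim F = 0 ↔ quasiAssouadDim F = 0 :=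
  (assouadBound_of_finiteDimensional F).genUpperBoxDim_eq_zero_iff (Nat.cast_nonneg _)
    (by positivity)

end
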